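/- For the q-quadratic lattice x(s) = c₁qˢ + c₂q⁻ˢ + c₃, with [μ]_q = (q^{μ/2}−q^{−μ/2})/(q^{1/2}−q^{−1/2}) and x_γ(s) = x(s+γ/2), we have [α+1]_q·[x_β(z) − x_β(t−β)] − [β]_q·[x_{1−α}(t+α) − x_{1−α}(a)] = [α+1]_q·[x_β(z) − x_β(a−α−β)] − [α+β+1]_q·[x(t) − x(a−α)] for all t. -/
import Mathlib

/-- q-quadratic lattice `x(s) = c₁ qˢ + c₂ q⁻ˢ + c₃`. -/
noncomputable def qLattice (q c₁ c₂ c₃ s : ℝ) : ℝ := c₁ * q ^ s + c₂ * q ^ (-s) + c₃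
/-- Shifted lattice `x_γ(s) = x(s + γ/2)`. -/
noncomputable def qLatticeSh (q c₁ c₂ c₃ γ s : ℝ) : ℝ := qLattice q c₁ c₂ c₃ (s + γ / 2)
/-- The q-number `[μ]_q = (q^{μ/2} − q^{−μ/2})/(q^{1/2} − q^{−1/2})`. -/
noncomputable def qNum (q μ : ℝ) : ℝ :=
  (q ^ (μ / 2) - q ^ (-(μ / 2))) / (q ^ ((1 : ℝ) / 2) - q ^ (-(1 : ℝ) / 2))

set_option maxHeartbeats 1000000 in
private lemma key7 (u A B T Z W c₁ c₂ c₃ D : ℝ) (hu : u ≠ 0) (hA : A ≠ 0) (hB : B ≠ 0)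
    (hT : T ≠ 0) (hZ : Z ≠ 0) (hW : W ≠ 0) (hD : D ≠ 0) :
    ((A * u - (A * u)⁻¹) / D) *
        ((c₁ * (Z * B) + c₂ * (Z * B)⁻¹ + c₃) - (c₁ * (T * B⁻¹) + c₂ * (T * B⁻¹)⁻¹ + c₃))
      - ((B - B⁻¹) / D) *
        ((c₁ * (T * (A * u)) + c₂ * (T * (A * u))⁻¹ + c₃)
          - (c₁ * (W * (u * A⁻¹)) + c₂ * (W * (u * A⁻¹))⁻¹ + c₃))
    = ((A * u - (A * u)⁻¹) / D) *
        ((c₁ * (Z * B) + c₂ * (Z * B)⁻¹ + c₃)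
          - (c₁ * (W * (A * A * B)⁻¹) + c₂ * (W * (A * A * B)⁻¹)⁻¹ + c₃))
      - ((A * B * u - (A * B * u)⁻¹) / D) *
        ((c₁ * T + c₂ * T⁻¹ + c₃) - (c₁ * (W * (A * A)⁻¹) + c₂ * (W * (A * A)⁻¹)⁻¹ + c₃)) := by
  field_simp
  ring

theorem stmt7 (q c₁ c₂ c₃ a z α β : ℝ) (hq : 0 < q) (hq1 : q ≠ 1) :
    ∀ t : ℝ,
      qNum q (α + 1) *
          (qLatticeSh q c₁ c₂ c₃ β z - qLatticeSh q c₁ c₂ c₃ β (t - β))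
        - qNum q β *
          (qLatticeSh q c₁ c₂ c₃ (1 - α) (t + α) - qLatticeSh q c₁ c₂ c₃ (1 - α) a)
      = qNum q (α + 1) *
          (qLatticeSh q c₁ c₂ c₃ β z - qLatticeSh q c₁ c₂ c₃ β (a - α - β))
        - qNum q (α + β + 1) *
          (qLattice q c₁ c₂ c₃ t - qLattice q c₁ c₂ c₃ (a - α)) := by
  intro t
  have hm : ∀ x y : ℝ, q ^ (x + y) = q ^ x * q ^ y := fun x y => Real.rpow_add hq x y
  have hn : ∀ x : ℝ, q ^ (-x) = (q ^ x)⁻¹ := fun x => Real.rpow_neg hq.le x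
  have hpos : ∀ x : ℝ, q ^ x ≠ 0 := fun x => (Real.rpow_pos_of_pos hq x).ne'
  have hD : q ^ ((1 : ℝ) / 2) - (q ^ ((1 : ℝ) / 2))⁻¹ ≠ 0 := by
    rw [← hn]
    intro h
    apply hq1
    have h' : q ^ ((1 : ℝ) / 2) = q ^ (-((1 : ℝ) / 2)) := by linarith [sub_eq_zero.mp h]
    have h2 : q ^ ((1:ℝ)/2) * q ^ ((1:ℝ)/2) = q ^ ((1:ℝ)/2) * q ^ (-((1:ℝ)/2)) := by rw [h']
    rw [← Real.rpow_add hq, ← Real.rpow_add hq] at h2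
    norm_num at h2
    exact h2
  simp only [qNum, qLattice, qLatticeSh]
  rw [show (-(1:ℝ)/2) = -((1:ℝ)/2) by ring]
  simp only [hn]
  rw [show (α + 1)/2 = α/2 + (1:ℝ)/2 by ring, hm (α/2) ((1:ℝ)/2)]
  rw [show (α + β + 1)/2 = α/2 + β/2 + (1:ℝ)/2 by ring, hm (α/2 + β/2) ((1:ℝ)/2),
      hm (α/2) (β/2)]
  rw [hm z (β/2)]
  rw [show t - β + β/2 = t + (-(β/2)) by ring, hm t (-(β/2)), hn (β/2)]
  rw [show t + α + (1 - α)/2 = t + (α/2 + (1:ℝ)/2) by ring, hm t (α/2 + (1:ℝ)/2),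
      hm (α/2) ((1:ℝ)/2)]
  rw [show a + (1 - α)/2 = a + ((1:ℝ)/2 + (-(α/2))) by ring, hm a ((1:ℝ)/2 + (-(α/2))),
      hm ((1:ℝ)/2) (-(α/2)), hn (α/2)]
  rw [show a - α - β + β/2 = a + (-(α/2 + α/2 + β/2)) by ring, hm a (-(α/2 + α/2 + β/2)),
      hn (α/2 + α/2 + β/2), hm (α/2 + α/2) (β/2), hm (α/2) (α/2)]
  rw [show a - α = a + (-(α/2 + α/2)) by ring, hm a (-(α/2 + α/2)),
      hn (α/2 + α/2), hm (α/2) (α/2)]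
  exact key7 (q ^ ((1:ℝ)/2)) (q ^ (α/2)) (q ^ (β/2)) (q ^ t) (q ^ z) (q ^ a) c₁ c₂ c₃ _
    (hpos _) (hpos _) (hpos _) (hpos _) (hpos _) (hpos _) hD
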